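/- Let (W, 𝒞) be a convex geometry and A, B ⊆ W with A finite. Then the following are equivalent: (1) for every C ∈ 𝒞 with A ⊄ C there exists D ∈ 𝒞 with C ⊆ D, A ⊄ D, and A ⊆ D ∪ B; (2) ex(A) ⊆ B; (3) A ⊆ co(A ∩ B). -/

import Mathlib

/-!
Extreme points are detected by "peeling": by anti-exchange, a convex set `C` missing some point
of the finite set `A` can be enlarged, within `𝒞`, until it misses exactly one point `a` of `A`;
such an `a` lies outside `co (A \ {a})`, so it is extreme. Hence (2) gives (1) and (3), by peeling
`C` resp. `co (A ∩ B)`. Conversely, an extreme point `x ∉ B` would violate (1) at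
`C = co (A \ {x})` and (3) because `A ∩ B ⊆ A \ {x}`.
-/

open Set

def interClosed {W : Type*} (𝒞 : Set (Set W)) : Prop := ∀ 𝒳 ⊆ 𝒞, ⋂₀ 𝒳 ∈ 𝒞

def antiExchange {W : Type*} (𝒞 : Set (Set W)) : Prop :=
  ∀ C ∈ 𝒞, ∀ x y : W, x ∉ C → y ∉ C → x ≠ y →
    ∃ D ∈ 𝒞, C ⊆ D ∧ ((x ∈ D ∧ y ∉ D) ∨ (x ∉ D ∧ y ∈ D))

def hullOf {W : Type*} (𝒞 : Set (Set W)) (X : Set W) : Set W := ⋂₀ {C | C ∈ 𝒞 ∧ X ⊆ C}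

def exOf {W : Type*} (𝒞 : Set (Set W)) (X : Set W) : Set W :=
  {x | x ∈ X ∧ x ∉ hullOf 𝒞 (X \ {x})}

section ConvexGeometry

variable {W : Type*} {𝒞 : Set (Set W)}

lemma subset_hullOf (X : Set W) : X ⊆ hullOf 𝒞 X :=
  fun _ hx _ hC => hC.2 hx

lemma hullOf_subset {X C : Set W} (hC : C ∈ 𝒞) (h : X ⊆ C) : hullOf 𝒞 X ⊆ C :=
  sInter_subset_of_mem ⟨hC, h⟩

lemma hullOf_mono {X Y : Set W} (h : X ⊆ Y) : hullOf 𝒞 X ⊆ hullOf 𝒞 Y :=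
  fun _ hx C hC => hx C ⟨hC.1, h.trans hC.2⟩

lemma hullOf_mem (hI : interClosed 𝒞) (X : Set W) : hullOf 𝒞 X ∈ 𝒞 :=
  hI _ fun _ hC => hC.1

lemma mem_exOf_of_diff_singleton_subset {A D : Set W} {a : W} (hD : D ∈ 𝒞) (ha : a ∈ A)
    (hAD : A \ {a} ⊆ D) (haD : a ∉ D) : a ∈ exOf 𝒞 A :=
  ⟨ha, fun h => haD (hullOf_subset hD hAD h)⟩

lemma mem_exOf_iff_not_subset_hullOf {A : Set W} {x : W} (hx : x ∈ A) :
    x ∈ exOf 𝒞 A ↔ ¬ A ⊆ hullOf 𝒞 (A \ {x}) := by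
  refine ⟨fun hex hA => hex.2 (hA hx), fun h => ⟨hx, fun hx' => h ?_⟩⟩
  have hA : A ⊆ insert x (hullOf 𝒞 (A \ {x})) := sdiff_singleton_subset_iff.mp (subset_hullOf _)
  rwa [insert_eq_of_mem hx'] at hA

lemma antiExchange.exists_superset_diff_ssubset (hAE : antiExchange 𝒞) {A C : Set W}
    (hC : C ∈ 𝒞) {a b : W} (ha : a ∈ A \ C) (hb : b ∈ A \ C) (hab : a ≠ b) :
    ∃ E ∈ 𝒞, C ⊆ E ∧ ¬ A ⊆ E ∧ A \ E ⊂ A \ C := by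
  obtain ⟨E, hE, hCE, ⟨haE, hbE⟩ | ⟨haE, hbE⟩⟩ := hAE C hC a b ha.2 hb.2 hab
  · exact ⟨E, hE, hCE, fun h => hbE (h hb.1), sdiff_subset_sdiff_right hCE,
      fun h => (h ha).2 haE⟩
  · exact ⟨E, hE, hCE, fun h => haE (h ha.1), sdiff_subset_sdiff_right hCE,
      fun h => (h hb).2 hbE⟩

lemma antiExchange.exists_superset_diff_eq_singleton (hAE : antiExchange 𝒞) {A : Set W}
    (hA : A.Finite) {C : Set W} (hC : C ∈ 𝒞) (hAC : ¬ A ⊆ C) :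
    ∃ D ∈ 𝒞, C ⊆ D ∧ ∃ a ∈ A, A \ {a} ⊆ D ∧ a ∉ D := by
  induction hn : (A \ C).ncard using Nat.strong_induction_on generalizing C with
  | _ n ih =>
    obtain ⟨a, ha⟩ : (A \ C).Nonempty := sdiff_nonempty.mpr hAC
    by_cases hone : A \ C ⊆ {a}
    · exact ⟨C, hC, Subset.rfl, a, ha.1,
        fun x hx => by_contra fun hxC => hx.2 (hone ⟨hx.1, hxC⟩), ha.2⟩
    obtain ⟨b, hb, hba⟩ := not_subset.mp hone
    obtain ⟨E, hE, hCE, hAE', hlt⟩ :=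
      hAE.exists_superset_diff_ssubset hC ha hb (Ne.symm hba)
    obtain ⟨D, hD, hED, rest⟩ :=
      ih _ (hn ▸ ncard_lt_ncard hlt hA.sdiff) hE hAE' rfl
    exact ⟨D, hD, hCE.trans hED, rest⟩

lemma antiExchange.exists_mem_exOf_not_mem_superset (hAE : antiExchange 𝒞) {A : Set W}
    (hA : A.Finite) {C : Set W} (hC : C ∈ 𝒞) (hAC : ¬ A ⊆ C) :
    ∃ D ∈ 𝒞, C ⊆ D ∧ ∃ a ∈ exOf 𝒞 A, A \ {a} ⊆ D ∧ a ∉ D := by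
  obtain ⟨D, hD, hCD, a, ha, hAD, haD⟩ := hAE.exists_superset_diff_eq_singleton hA hC hAC
  exact ⟨D, hD, hCD, a, mem_exOf_of_diff_singleton_subset hD ha hAD haD, hAD, haD⟩

end ConvexGeometry

theorem simpler_clause {W : Type*} (𝒞 : Set (Set W))
    (hI : interClosed 𝒞) (hAE : antiExchange 𝒞) (A B : Set W) (hA : A.Finite) :
    ((∀ C ∈ 𝒞, ¬ A ⊆ C → ∃ D ∈ 𝒞, C ⊆ D ∧ ¬ A ⊆ D ∧ A ⊆ D ∪ B) ↔ exOf 𝒞 A ⊆ B) ∧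
    (exOf 𝒞 A ⊆ B ↔ A ⊆ hullOf 𝒞 (A ∩ B)) := by
  refine ⟨⟨fun h1 x hx => by_contra fun hxB => ?_, fun h2 C hC hAC => ?_⟩,
    ⟨fun h2 => by_contra fun h3 => ?_, fun h3 x hx => by_contra fun hxB => ?_⟩⟩
  · obtain ⟨D, -, hCD, hAD, hADB⟩ :=
      h1 _ (hullOf_mem hI _) ((mem_exOf_iff_not_subset_hullOf hx.1).mp hx)
    refine hAD fun y hy => (hADB hy).elim id fun hyB => hCD (subset_hullOf _ ⟨hy, ?_⟩)
    rintro rfl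
    exact hxB hyB
  · obtain ⟨D, hD, hCD, a, ha, hAD, haD⟩ := hAE.exists_mem_exOf_not_mem_superset hA hC hAC
    refine ⟨D, hD, hCD, fun h => haD (h ha.1), fun x hx => ?_⟩
    exact (sdiff_singleton_subset_iff.mp hAD hx).elim (fun hxa => Or.inr (hxa ▸ h2 ha)) Or.inl
  · obtain ⟨D, -, hCD, a, ha, -, haD⟩ :=
      hAE.exists_mem_exOf_not_mem_superset hA (hullOf_mem hI _) h3
    exact haD (hCD (subset_hullOf _ ⟨ha.1, h2 ha⟩))
  · have hsub : A ∩ B ⊆ A \ {x} := fun y hy => ⟨hy.1, fun h => hxB (h ▸ hy.2)⟩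
    exact hx.2 (hullOf_mono hsub (h3 hx.1))
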